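/- Let Γ be a group and βΓ the Stone–Čech compactification of the discrete space Γ, with the extended right translation action of Γ. Let h : Γ × Γ → ℝ be a function such that s ↦ h(s, s·t) is bounded for each fixed t ∈ Γ, and let α*(h) : βΓ × Γ → ℝ be defined by letting α*(h)(·, t) be the continuous extension to βΓ of s ↦ h(s, s·t). If h is of negative type on Γ × Γ, then α*(h) is of negative type on the groupoid βΓ⋊Γ: α*(h)(x, e) = 0 for all x ∈ βΓ; α*(h)(x·s, s⁻¹·t) = α*(h)(x·t, t⁻¹·s) for all x ∈ βΓ and s, t ∈ Γ; and Σ_{i,j} a_i·α*(h)(x·s_i, s_i⁻¹·s_j)·a_j ≤ 0 for all x ∈ βΓ, s_1, …, s_n ∈ Γ and a_1, …, a_n ∈ ℝ with Σ_j a_j = 0. -/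

import Mathlib

noncomputable section

open scoped ComplexConjugate ComplexOrder

/-- Right translation by `t ∈ Γ` on the Stone–Čech compactification of the discrete space `Γ`:
the continuous extension of `s ↦ ι(s·t)`. -/
def rightTranslate {Γ : Type*} [Group Γ] [TopologicalSpace Γ] [DiscreteTopology Γ] (t : Γ)
    (x : StoneCech Γ) : StoneCech Γ :=
  stoneCechExtend (continuous_of_discreteTopology (f := fun s : Γ => stoneCechUnit (s * t))) x

/-- A function on the transformation groupoid `βΓ ⋊ Γ` is positive definite. -/
def GroupoidPosDef {Γ : Type*} [Group Γ] [TopologicalSpace Γ] [DiscreteTopology Γ]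
    (φ : StoneCech Γ → Γ → ℂ) : Prop :=
  ∀ (x : StoneCech Γ) (n : ℕ) (s : Fin n → Γ) (z : Fin n → ℂ),
    0 ≤ ∑ i, ∑ j, conj (z i) * φ (rightTranslate (s i) x) ((s i)⁻¹ * s j) * z j

/-- A function on the transformation groupoid `βΓ ⋊ Γ` is of negative type. -/
def GroupoidNegType {Γ : Type*} [Group Γ] [TopologicalSpace Γ] [DiscreteTopology Γ]
    (ψ : StoneCech Γ → Γ → ℝ) : Prop :=
  (∀ x : StoneCech Γ, ψ x 1 = 0) ∧
    (∀ (x : StoneCech Γ) (s t : Γ),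
      ψ (rightTranslate s x) (s⁻¹ * t) = ψ (rightTranslate t x) (t⁻¹ * s)) ∧
    ∀ (x : StoneCech Γ) (n : ℕ) (s : Fin n → Γ) (a : Fin n → ℝ),
      (∑ j, a j) = 0 →
        (∑ i, ∑ j, a i * ψ (rightTranslate (s i) x) ((s i)⁻¹ * s j) * a j) ≤ 0

/-- A function on `βΓ ⋊ Γ` is proper: it is large off `βΓ × F` for finite sets `F ⊆ Γ`. -/
def GroupoidProper {Γ : Type*} [Group Γ] [TopologicalSpace Γ] [DiscreteTopology Γ]
    (ψ : StoneCech Γ → Γ → ℝ) : Prop :=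
  ∀ C > 0, ∃ F : Finset Γ, ∀ (x : StoneCech Γ) (t : Γ), t ∉ F → C < |ψ x t|

/-- Membership in `C₀(βΓ ⋊ Γ)`: continuous in the `βΓ`-variable, and uniformly small off
`βΓ × F` for finite sets `F ⊆ Γ`. -/
def MemC0Groupoid {Γ : Type*} [Group Γ] [TopologicalSpace Γ] [DiscreteTopology Γ]
    (φ : StoneCech Γ → Γ → ℂ) : Prop :=
  (∀ t : Γ, Continuous fun x => φ x t) ∧
    ∀ ε > 0, ∃ F : Finset Γ, ∀ (x : StoneCech Γ) (t : Γ), t ∉ F → ‖φ x t‖ < ε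

/-- A sequence in `C₀(βΓ ⋊ Γ)` is an approximate unit for `C₀(βΓ ⋊ Γ)`. -/
def GroupoidApproxUnit {Γ : Type*} [Group Γ] [TopologicalSpace Γ] [DiscreteTopology Γ]
    (u : ℕ → StoneCech Γ → Γ → ℂ) : Prop :=
  (∀ n, MemC0Groupoid (u n)) ∧
    ∀ φ, MemC0Groupoid φ → ∀ ε > 0, ∃ N, ∀ n ≥ N, ∀ (x : StoneCech Γ) (t : Γ),
      ‖u n x t * φ x t - φ x t‖ < ε
/-- `h : Γ × Γ → ℝ` is of negative type. -/
def IsNegativeType {X : Type*} (h : X → X → ℝ) : Prop :=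
  (∀ x, h x x = 0) ∧ (∀ x y, h x y = h y x) ∧
    ∀ (n : ℕ) (x : Fin n → X) (a : Fin n → ℝ),
      (∑ j, a j) = 0 → (∑ i, ∑ j, a i * h (x i) (x j) * a j) ≤ 0

/-!
On the dense image of `Γ` in `βΓ` each of the three conditions is a condition on `h`: at `x = ι u`
the groupoid element `(ι u · s, s⁻¹ t)` is sent by `H` to `h (u s) (u t)`, so the conditions become
`h (u, u) = 0`, the symmetry of `h`, and the negative-type inequality for the points `u sᵢ`.
Each condition is closed in `x`, because `H (·, t)` and right translations are continuous, so it
extends from `ι(Γ)` to all of `βΓ`.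
-/

section RightTranslate

variable {Γ : Type*} [Group Γ] [TopologicalSpace Γ] [DiscreteTopology Γ]

theorem rightTranslate_stoneCechUnit (t s : Γ) :
    rightTranslate t (stoneCechUnit s) = stoneCechUnit (s * t) :=
  congrFun (stoneCechExtend_extends continuous_of_discreteTopology) s

@[fun_prop]
theorem continuous_rightTranslate (t : Γ) :
    Continuous (rightTranslate t : StoneCech Γ → StoneCech Γ) :=
  continuous_stoneCechExtend _

theorem apply_rightTranslate_stoneCechUnit {h : Γ → Γ → ℝ} {H : StoneCech Γ → Γ → ℝ}
    (hHext : ∀ s t : Γ, H (stoneCechUnit s) t = h s (s * t)) (u s t : Γ) :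
    H (rightTranslate s (stoneCechUnit u)) (s⁻¹ * t) = h (u * s) (u * t) := by
  rw [rightTranslate_stoneCechUnit, hHext, mul_assoc, mul_inv_cancel_left]

end RightTranslate

section Extension

variable {Γ : Type*} [Group Γ] [TopologicalSpace Γ] {h : Γ → Γ → ℝ} {H : StoneCech Γ → Γ → ℝ}
  (hHcont : ∀ t : Γ, Continuous fun x => H x t)
  (hHext : ∀ s t : Γ, H (stoneCechUnit s) t = h s (s * t))
include hHcont hHext

theorem apply_one_eq_zero (h_diag : ∀ s, h s s = 0) (x : StoneCech Γ) : H x 1 = 0 :=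
  denseRange_stoneCechUnit.induction_on x (isClosed_eq (hHcont 1) continuous_const)
    fun u => by rw [hHext, mul_one, h_diag]

variable [DiscreteTopology Γ]

theorem apply_rightTranslate_comm (h_symm : ∀ s t, h s t = h t s) (x : StoneCech Γ) (s t : Γ) :
    H (rightTranslate s x) (s⁻¹ * t) = H (rightTranslate t x) (t⁻¹ * s) :=
  denseRange_stoneCechUnit.induction_on x (isClosed_eq (by fun_prop) (by fun_prop)) fun u => by
    rw [apply_rightTranslate_stoneCechUnit hHext, apply_rightTranslate_stoneCechUnit hHext, h_symm]

theorem sum_sum_mul_apply_rightTranslate_nonpos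
    (h_neg : ∀ (n : ℕ) (x : Fin n → Γ) (a : Fin n → ℝ),
      (∑ j, a j) = 0 → (∑ i, ∑ j, a i * h (x i) (x j) * a j) ≤ 0)
    (x : StoneCech Γ) {n : ℕ} (s : Fin n → Γ) (a : Fin n → ℝ) (ha : ∑ j, a j = 0) :
    ∑ i, ∑ j, a i * H (rightTranslate (s i) x) ((s i)⁻¹ * s j) * a j ≤ 0 := by
  refine denseRange_stoneCechUnit.induction_on x
    (isClosed_le (by fun_prop) continuous_const) fun u => ?_
  simpa only [apply_rightTranslate_stoneCechUnit hHext] using h_neg n (fun i => u * s i) a ha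

end Extension

theorem extension_negative_type_of_negative_type_general {Γ : Type*} [Group Γ]
    [TopologicalSpace Γ] [DiscreteTopology Γ]
    (h : Γ → Γ → ℝ)
    (H : StoneCech Γ → Γ → ℝ)
    (hHcont : ∀ t : Γ, Continuous fun x => H x t)
    (hHext : ∀ s t : Γ, H (stoneCechUnit s) t = h s (s * t))
    (hh : IsNegativeType h) :
    GroupoidNegType H := by
  obtain ⟨h_diag, h_symm, h_neg⟩ := hh
  exact ⟨apply_one_eq_zero hHcont hHext h_diag, apply_rightTranslate_comm hHcont hHext h_symm,
    fun x _ s a ha => sum_sum_mul_apply_rightTranslate_nonpos hHcont hHext h_neg x s a ha⟩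

theorem extension_negative_type_of_negative_type {Γ : Type*} [Group Γ]
    [TopologicalSpace Γ] [DiscreteTopology Γ]
    (h : Γ → Γ → ℝ) (hb : ∀ t : Γ, ∃ M, ∀ s : Γ, |h s (s * t)| ≤ M)
    (H : StoneCech Γ → Γ → ℝ)
    (hHcont : ∀ t : Γ, Continuous fun x => H x t)
    (hHext : ∀ s t : Γ, H (stoneCechUnit s) t = h s (s * t))
    (hh : IsNegativeType h) :
    GroupoidNegType H :=
  extension_negative_type_of_negative_type_general h H hHcont hHext hh
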